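/- Let α > 1 and β ∈ (0,1) be real numbers such that log α and log β are rationally independent (i.e., linearly independent over ℚ). Then the set {α^m · β^n : m ∈ ℤ, n ∈ ℕ} is dense in (0, ∞). -/
import Mathlib

/-- Small nonzero element `c·a + d·b` with `d ≥ 1`, from Dirichlet approximation. -/
lemma exists_small_elt (a b : ℝ) (ha : 0 < a)
    (hind : ∀ p q : ℤ, (p : ℝ) * a + (q : ℝ) * b = 0 → p = 0 ∧ q = 0) :
    ∀ ε > 0, ∃ (c : ℤ) (d : ℕ), 0 < d ∧ (c : ℝ) * a + (d : ℝ) * b ≠ 0 ∧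
      |(c : ℝ) * a + (d : ℝ) * b| < ε := by
  intro ε hε
  obtain ⟨N, hN⟩ := exists_nat_gt (a / ε)
  have hN1 : (0 : ℕ) < N + 1 := Nat.succ_pos N
  obtain ⟨j, k, hk0, hkN, hjk⟩ := Real.exists_int_int_abs_mul_sub_le (b / a) hN1
  have hkt : (k.toNat : ℝ) = (k : ℝ) := by
    rw [← Int.cast_natCast, Int.toNat_of_nonneg hk0.le]
  refine ⟨-j, k.toNat, ?_, ?_, ?_⟩
  · omega
  · intro h
    have := hind (-j) k.toNat (by rw [← h]; push_cast [hkt]; ring)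
    omega
  · have key : ((-j : ℤ) : ℝ) * a + (k.toNat : ℝ) * b = ((k : ℝ) * (b / a) - j) * a := by
      rw [hkt]
      push_cast
      field_simp
      ring
    rw [key, abs_mul, abs_of_pos ha]
    calc |(k : ℝ) * (b / a) - j| * a ≤ (1 / ((N + 1 : ℕ) + 1)) * a := by
          gcongr
      _ ≤ (1 / ((N : ℝ) + 1)) * a := by
          gcongr
          push_cast; linarith
      _ < ε := by
          rw [div_mul_eq_mul_div, one_mul, div_lt_iff₀ (by positivity)]
          have h1 : a / ε < (N : ℝ) + 1 := lt_of_lt_of_le hN (by linarith)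
          calc a = (a / ε) * ε := by field_simp
            _ < ((N : ℝ) + 1) * ε := by gcongr
            _ = ε * ((N : ℝ) + 1) := by ring

/-- Density of `{m·a + n·b : m ∈ ℤ, n ∈ ℕ}` in `ℝ`. -/
lemma semigroup_dense (a b : ℝ) (ha : 0 < a)
    (hind : ∀ p q : ℤ, (p : ℝ) * a + (q : ℝ) * b = 0 → p = 0 ∧ q = 0) :
    ∀ t : ℝ, ∀ ε > 0, ∃ (m : ℤ) (n : ℕ), |(m : ℝ) * a + (n : ℝ) * b - t| < ε := by
  intro t ε hε
  obtain ⟨c, d, hd, hs0, hsε⟩ := exists_small_elt a b ha hind ε hε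
  set s : ℝ := (c : ℝ) * a + (d : ℝ) * b with hs
  rcases hs0.lt_or_gt with hneg | hpos
  · -- s < 0 : go down from above t
    set M : ℤ := ⌈t / a⌉ with hM
    have hMa : t ≤ (M : ℝ) * a := by
      rw [← div_le_iff₀ ha]; exact Int.le_ceil _
    set t' : ℝ := t - (M : ℝ) * a with ht'
    have ht'0 : t' ≤ 0 := by simp [ht']; linarith
    have hq : (0 : ℝ) ≤ t' / s := by
      rw [← neg_div_neg_eq]; exact div_nonneg (by linarith) (by linarith)
    set k : ℕ := ⌊t' / s⌋.toNat with hk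
    have hkq : (k : ℝ) = (⌊t' / s⌋ : ℝ) := by
      rw [hk, ← Int.cast_natCast, Int.toNat_of_nonneg (Int.floor_nonneg.mpr hq)]
    refine ⟨M + k * c, k * d, ?_⟩
    have hval : ((M + k * c : ℤ) : ℝ) * a + ((k * d : ℕ) : ℝ) * b - t = (k : ℝ) * s - t' := by
      push_cast; rw [hs, ht']; ring
    rw [hval]
    -- k ≤ t'/s < k + 1, s < 0 ⇒ s < t' - k*s ≤ 0
    have h1 : (k : ℝ) ≤ t' / s := by rw [hkq]; exact Int.floor_le _
    have h2 : t' / s < (k : ℝ) + 1 := by rw [hkq]; exact Int.lt_floor_add_one _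
    have hks1 : (k : ℝ) * s ≥ t' := by
      have := mul_le_mul_of_nonpos_right h1 hneg.le
      rw [div_mul_cancel₀ _ hneg.ne] at this; linarith
    have hks2 : t' > ((k : ℝ) + 1) * s := by
      have := mul_lt_mul_of_neg_right h2 hneg
      rw [div_mul_cancel₀ _ hneg.ne] at this; linarith
    have : |(k : ℝ) * s - t'| ≤ |s| := by
      rw [abs_le, abs_of_neg hneg]
      constructor <;> nlinarith
    linarith
  · -- s > 0 : go up from below t
    set M : ℤ := ⌊t / a⌋ with hM
    have hMa : (M : ℝ) * a ≤ t := by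
      rw [← le_div_iff₀ ha]; exact Int.floor_le _
    set t' : ℝ := t - (M : ℝ) * a with ht'
    have ht'0 : 0 ≤ t' := by simp [ht']; linarith
    have hq : (0 : ℝ) ≤ t' / s := div_nonneg ht'0 hpos.le
    set k : ℕ := ⌊t' / s⌋.toNat with hk
    have hkq : (k : ℝ) = (⌊t' / s⌋ : ℝ) := by
      rw [hk, ← Int.cast_natCast, Int.toNat_of_nonneg (Int.floor_nonneg.mpr hq)]
    refine ⟨M + k * c, k * d, ?_⟩
    have hval : ((M + k * c : ℤ) : ℝ) * a + ((k * d : ℕ) : ℝ) * b - t = (k : ℝ) * s - t' := by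
      push_cast; rw [hs, ht']; ring
    rw [hval]
    have h1 : (k : ℝ) ≤ t' / s := by rw [hkq]; exact Int.floor_le _
    have h2 : t' / s < (k : ℝ) + 1 := by rw [hkq]; exact Int.lt_floor_add_one _
    have hks1 : (k : ℝ) * s ≤ t' := by
      have := mul_le_mul_of_nonneg_right h1 hpos.le
      rw [div_mul_cancel₀ _ hpos.ne'] at this; linarith
    have hks2 : t' < ((k : ℝ) + 1) * s := by
      have := mul_lt_mul_of_pos_right h2 hpos
      rw [div_mul_cancel₀ _ hpos.ne'] at this; linarith
    have : |(k : ℝ) * s - t'| ≤ |s| := by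
      rw [abs_le, abs_of_pos hpos]
      constructor <;> nlinarith
    linarith

/-- If `α > 1`, `β ∈ (0,1)` and `log α`, `log β` are rationally independent, then
`{α^m * β^n : m ∈ ℤ, n ∈ ℕ}` is dense in `(0, ∞)`. -/
theorem orbit_dense_in_Ioi (α β : ℝ) (hα : 1 < α) (hβ : β ∈ Set.Ioo (0 : ℝ) 1)
    (hind : ∀ p q : ℤ, (p : ℝ) * Real.log α + (q : ℝ) * Real.log β = 0 → p = 0 ∧ q = 0) :
    Set.Ioi (0 : ℝ) ⊆ closure {x : ℝ | ∃ (m : ℤ) (n : ℕ), x = α ^ m * β ^ n} := by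
  set a := Real.log α with haDef
  set b := Real.log β with hbDef
  have ha : 0 < a := Real.log_pos hα
  have hα0 : 0 < α := lt_trans zero_lt_one hα
  have hβ0 : 0 < β := hβ.1
  set S : Set ℝ := {y : ℝ | ∃ (m : ℤ) (n : ℕ), y = (m : ℝ) * a + (n : ℝ) * b} with hS
  have hSdense : Dense S := by
    rw [Metric.dense_iff]
    intro t ε hε
    obtain ⟨m, n, hmn⟩ := semigroup_dense a b ha hind t ε hε
    exact ⟨(m : ℝ) * a + (n : ℝ) * b, Metric.mem_ball.mpr (by rwa [Real.dist_eq]), m, n, rfl⟩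
  have hexp : ∀ (m : ℤ) (n : ℕ), Real.exp ((m : ℝ) * a + (n : ℝ) * b) = α ^ m * β ^ n := by
    intro m n
    rw [Real.exp_add]
    congr 1
    · rw [← Real.rpow_intCast α m, Real.rpow_def_of_pos hα0, mul_comm]
    · rw [← Real.rpow_natCast β n, Real.rpow_def_of_pos hβ0, mul_comm]
  intro x hx
  have hx0 : (0 : ℝ) < x := hx
  have h1 : x = Real.exp (Real.log x) := (Real.exp_log hx0).symm
  have h2 : Real.log x ∈ closure S := hSdense _
  have h3 : x ∈ Real.exp '' closure S := ⟨Real.log x, h2, h1.symm⟩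
  have h4 : Real.exp '' closure S ⊆ closure (Real.exp '' S) :=
    image_closure_subset_closure_image Real.continuous_exp
  refine closure_mono ?_ (h4 h3)
  rintro y ⟨z, ⟨m, n, rfl⟩, rfl⟩
  exact ⟨m, n, hexp m n⟩
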